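/- arXiv:2103.01577 — 3 statements merged into one kernel-verified Lean document; each statement's English description precedes it below -/
import Mathlib

section
/- Let t ∈ [0,T]. Then ∫_t^T f(t,u) du + ∫_{(t,T]} g(t,u) μ_t(du) = ∫_0^T f₀(u) du − ∫_0^t f(u,u) du + ∫_{(0,t]} ( ā(v,T) + ᾱ(v,T) ) ν(dv) + ∫_{[0,t]×[0,T]} 1_{{u>s}} g(s,u) μ(ds,du) − ∫_{(0,t]} g(u−,u) μ̄(du). (This is the representation of Lemma 3.2 of the paper — the exponent of the credit risky bond price P(t,T) = exp(−∫_t^T f(t,u)du − ∫_{(t,T]} g(t,u)μ_t(du)) — in the finite-variation case, i.e. with the martingale driver X ≡ 0 and the Stieltjes measure of the increasing process A given by ν.) -/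
/-!
Both sides split into a Lebesgue part, in `f`, and a `μ`-part, in `g`, which are proved separately.

Put `A(u) = ∫_{(0,t]} a(v,u) ν(dv)`. Since `a(v,u) = 0` for `u < v`, we have
`f(t,u) = f₀(u) + A(u)`, also `f(u,u) = f₀(u) + A(u)` for `u ≤ t`, and `ā(v,T) = ∫_0^T a(v,u) du`
for `v ∈ (0,t]`; hence by Fubini `∫_{(0,t]} ā(v,T) ν(dv) = ∫_0^T A`. The `f`-part is then
additivity of `∫ (f₀ + A)` over `[0,t] ∪ [t,T]`.

By Fubini, `∫_{(0,t]} ᾱ(v,T) ν(dv)` is the `μ`-integral of `∫_{(s,u) ∩ (0,t]} α(v,u) ν(dv)`, and the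
`g`-part holds pointwise at `μ`-almost every `(s,u)`, that is for `0 ≤ s < u ≤ T`: if `s ≤ t` both
sides equal `g₀(u) + ∫_{(0,t] ∩ (0,u)} α(v,u) ν(dv)`, split at `s`, and if `t < s` both vanish.
-/

open MeasureTheory Set Function

theorem abs_indicator_uncurry_le {α β : Type*} {C : ℝ} {S : Set (α × β)} {F : α → β → ℝ}
    (hC : ∀ x y, |F x y| ≤ C) (x : α) (y : β) : |S.indicator (uncurry F) (x, y)| ≤ C :=
  le_trans (norm_indicator_le_norm_self (uncurry F) (x, y)) (hC x y)

section BoundedIntegrable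

variable {α β : Type*} [MeasurableSpace α] [MeasurableSpace β] {μ : Measure α} {ν : Measure β}
  {C : ℝ}

theorem integrable_of_abs_le [IsFiniteMeasure μ] {f : α → ℝ} (hf : Measurable f)
    (hC : ∀ x, |f x| ≤ C) : Integrable f μ :=
  .of_bound hf.aestronglyMeasurable C (ae_of_all _ hC)

theorem intervalIntegrable_of_abs_le {μ : Measure ℝ} [IsLocallyFiniteMeasure μ] {f : ℝ → ℝ}
    (hf : Measurable f) (hC : ∀ x, |f x| ≤ C) {a b : ℝ} : IntervalIntegrable f μ a b :=
  intervalIntegrable_const.mono_fun' hf.aestronglyMeasurable (ae_of_all _ hC)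

theorem integrable_integral_of_abs_le [IsFiniteMeasure μ] [IsFiniteMeasure ν] {F : α → β → ℝ}
    (hF : Measurable (uncurry F)) (hC : ∀ x y, |F x y| ≤ C) :
    Integrable (fun y => ∫ x, F x y ∂μ) ν :=
  (integrable_of_abs_le (μ := μ.prod ν) hF fun p => hC p.1 p.2).integral_prod_right

theorem integral_indicator_prodMk_right {S : Set (α × β)} (hS : MeasurableSet S) (F : α → β → ℝ)
    (y : β) : ∫ x, S.indicator (uncurry F) (x, y) ∂μ = ∫ x in {x | (x, y) ∈ S}, F x y ∂μ :=
  integral_indicator (s := {x | (x, y) ∈ S}) (f := fun x => F x y) (measurable_prodMk_right hS)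

theorem integral_indicator_prodMk_left {S : Set (α × β)} (hS : MeasurableSet S) (F : α → β → ℝ)
    (x : α) : ∫ y, S.indicator (uncurry F) (x, y) ∂ν = ∫ y in {y | (x, y) ∈ S}, F x y ∂ν :=
  integral_indicator (s := {y | (x, y) ∈ S}) (f := fun y => F x y) (measurable_prodMk_left hS)

theorem integrable_setIntegral_of_abs_le [IsFiniteMeasure μ] [IsFiniteMeasure ν]
    {S : Set (α × β)} (hS : MeasurableSet S) {F : α → β → ℝ} (hF : Measurable (uncurry F))
    (hC : ∀ x y, |F x y| ≤ C) :
    Integrable (fun y => ∫ x in {x | (x, y) ∈ S}, F x y ∂μ) ν :=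
  (integrable_integral_of_abs_le (μ := μ) (F := fun x y => S.indicator (uncurry F) (x, y))
    (hF.indicator hS) (abs_indicator_uncurry_le hC)).congr
    (ae_of_all _ (integral_indicator_prodMk_right hS F))

theorem integral_setIntegral_swap [IsFiniteMeasure μ] [IsFiniteMeasure ν]
    {S : Set (α × β)} (hS : MeasurableSet S) {F : α → β → ℝ} (hF : Measurable (uncurry F))
    (hC : ∀ x y, |F x y| ≤ C) :
    ∫ y, (∫ x in {x | (x, y) ∈ S}, F x y ∂μ) ∂ν = ∫ x, (∫ y in {y | (x, y) ∈ S}, F x y ∂ν) ∂μ := by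
  simp only [← integral_indicator_prodMk_right hS, ← integral_indicator_prodMk_left hS]
  exact (integral_integral_swap (f := fun x y => S.indicator (uncurry F) (x, y))
    (integrable_of_abs_le (hF.indicator hS) fun p => abs_indicator_uncurry_le hC p.1 p.2)).symm

end BoundedIntegrable

theorem intervalIntegral_eq_of_forall_lt_eq_zero {μ : Measure ℝ} [NullSingletonClass μ]
    {φ : ℝ → ℝ} {x v b : ℝ} (hφ : ∀ u < v, φ u = 0) (hxv : x ≤ v) (hvb : v ≤ b) :
    ∫ u in x..b, φ u ∂μ = ∫ u in v..b, φ u ∂μ := by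
  rw [intervalIntegral.integral_of_le hvb, intervalIntegral.integral_of_le (hxv.trans hvb)]
  refine setIntegral_eq_of_subset_of_ae_sdiff_eq_zero measurableSet_Ioc.nullMeasurableSet
    (Ioc_subset_Ioc_left hxv) ((Measure.ae_ne μ v).mono fun u hne hu => hφ u ?_)
  exact lt_of_le_of_ne (not_lt.1 fun h => hu.2 ⟨h, hu.1.2⟩) hne

section ForwardRate

variable {ν : Measure ℝ} [IsFiniteMeasure ν] {a : ℝ → ℝ → ℝ} {Ca : ℝ} {t T : ℝ}

theorem integrableOn_intervalIntegral (hameas : Measurable (uncurry a))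
    (habdd : ∀ v u, |a v u| ≤ Ca) (ha0 : ∀ v u, u < v → a v u = 0) (hT : 0 ≤ T) (htT : t ≤ T) :
    IntegrableOn (fun v => ∫ u in v..T, a v u) (Ioc 0 t) ν := by
  refine IntegrableOn.congr_fun ?_ (fun v hv =>
    intervalIntegral_eq_of_forall_lt_eq_zero (ha0 v) hv.1.le (hv.2.trans htT)) measurableSet_Ioc
  simp only [intervalIntegral.integral_of_le hT]
  exact integrable_integral_of_abs_le (μ := volume.restrict (Ioc 0 T)) (F := fun u v => a v u)
    (hameas.comp measurable_swap) fun u v => habdd v u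

theorem setIntegral_intervalIntegral_swap (hameas : Measurable (uncurry a))
    (habdd : ∀ v u, |a v u| ≤ Ca) (ha0 : ∀ v u, u < v → a v u = 0) (hT : 0 ≤ T) (htT : t ≤ T) :
    ∫ v in Ioc 0 t, (∫ u in v..T, a v u) ∂ν = ∫ u in 0..T, ∫ v in Ioc 0 t, a v u ∂ν := calc
  _ = ∫ v in Ioc 0 t, (∫ u in 0..T, a v u) ∂ν :=
    setIntegral_congr_fun measurableSet_Ioc fun v hv =>
      (intervalIntegral_eq_of_forall_lt_eq_zero (ha0 v) hv.1.le (hv.2.trans htT)).symm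
  _ = _ := by
    refine (intervalIntegral_integral_swap ?_).symm
    rw [uIoc_of_le hT]
    exact integrable_of_abs_le (hameas.comp measurable_swap) fun p => habdd p.2 p.1

theorem intervalIntegral_forward_rate {f₀ : ℝ → ℝ} {C₀ : ℝ} (hf₀meas : Measurable f₀)
    (hf₀bdd : ∀ u, |f₀ u| ≤ C₀) (hameas : Measurable (uncurry a)) (habdd : ∀ v u, |a v u| ≤ Ca)
    (ha0 : ∀ v u, u < v → a v u = 0) (ht : t ∈ Icc 0 T) :
    ∫ u in t..T, (f₀ u + ∫ v in Ioc 0 t, a v u ∂ν)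
      = (∫ u in (0:ℝ)..T, f₀ u) - (∫ u in (0:ℝ)..t, (f₀ u + ∫ v in Ioc 0 u, a v u ∂ν))
        + ∫ v in Ioc 0 t, (∫ u in v..T, a v u) ∂ν := by
  set A : ℝ → ℝ := fun u => ∫ v in Ioc 0 t, a v u ∂ν
  have hf₀ : ∀ x y, IntervalIntegrable f₀ volume x y := fun _ _ =>
    intervalIntegrable_of_abs_le hf₀meas hf₀bdd
  have hA : ∀ x y, IntervalIntegrable A volume x y := fun _ _ =>
    ⟨integrable_integral_of_abs_le hameas habdd, integrable_integral_of_abs_le hameas habdd⟩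
  have hdiag : ∫ u in (0:ℝ)..t, (f₀ u + ∫ v in Ioc 0 u, a v u ∂ν)
      = ∫ u in (0:ℝ)..t, (f₀ u + A u) :=
    intervalIntegral.integral_congr fun u hu => by
      rw [uIcc_of_le ht.1] at hu
      refine congrArg (f₀ u + ·) (setIntegral_eq_of_subset_of_forall_sdiff_eq_zero
        measurableSet_Ioc (Ioc_subset_Ioc_right hu.2) fun v hv => ha0 v u ?_).symm
      exact not_le.1 fun h => hv.2 ⟨hv.1.1, h⟩
  rw [hdiag, setIntegral_intervalIntegral_swap hameas habdd ha0 (ht.1.trans ht.2) ht.2,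
    ← intervalIntegral.integral_interval_sub_left ((hf₀ 0 T).add (hA 0 T))
      ((hf₀ 0 t).add (hA 0 t)),
    intervalIntegral.integral_add (hf₀ 0 T) (hA 0 T)]
  ring

end ForwardRate

theorem Ioc_inter_Iio_eq_union {X : Type*} [LinearOrder X] {a s t u : X} (hst : s ≤ t)
    (hsu : s < u) :
    Ioc a t ∩ Iio u = Ioc a s ∪ (Ioo s u ∩ Ioc a t) := by
  ext v
  simp only [mem_inter_iff, mem_Ioc, mem_Iio, mem_union, mem_Ioo]
  constructor
  · rintro ⟨⟨hav, hvt⟩, hvu⟩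
    exact (le_or_gt v s).imp (fun hvs => ⟨hav, hvs⟩) fun hsv => ⟨⟨hsv, hvu⟩, hav, hvt⟩
  · rintro (⟨hav, hvs⟩ | ⟨⟨-, hvu⟩, hav, hvt⟩)
    · exact ⟨⟨hav, hvs.trans hst⟩, hvs.trans_lt hsu⟩
    · exact ⟨⟨hav, hvt⟩, hvu⟩

theorem ite_add_ite_setIntegral_eq {ν : Measure ℝ} {h : ℝ → ℝ} (hh : Integrable h ν) (c : ℝ)
    {s t u : ℝ} (hsu : s < u) :
    ((if s ≤ t ∧ t < u then c + ∫ v in Ioc 0 t, h v ∂ν else 0)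
        + if u ≤ t then c + ∫ v in Ioo 0 u, h v ∂ν else 0)
      = (if s ≤ t then c + ∫ v in Ioc 0 s, h v ∂ν else 0) + ∫ v in Ioo s u ∩ Ioc 0 t, h v ∂ν := by
  by_cases hst : s ≤ t
  · have hJ : (if s ≤ t ∧ t < u then c + ∫ v in Ioc 0 t, h v ∂ν else 0)
        + (if u ≤ t then c + ∫ v in Ioo 0 u, h v ∂ν else 0)
        = c + ∫ v in Ioc 0 t ∩ Iio u, h v ∂ν := by
      rcases le_or_gt u t with hut | htu
      · have hIoo : Ioc 0 t ∩ Iio u = Ioo 0 u := by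
          ext v
          exact ⟨fun hv => ⟨hv.1.1, hv.2⟩, fun hv => ⟨⟨hv.1, hv.2.le.trans hut⟩, hv.2⟩⟩
        rw [if_neg fun h => not_lt.2 hut h.2, if_pos hut, zero_add, hIoo]
      · rw [if_pos ⟨hst, htu⟩, if_neg (not_le.2 htu), add_zero,
          inter_eq_left.2 fun v hv => hv.2.trans_lt htu]
    rw [hJ, if_pos hst, Ioc_inter_Iio_eq_union hst hsu,
      setIntegral_union (fun _ h₁ h₂ _ hv => not_lt.2 (h₁ hv).2 (h₂ hv).1.1)
        (measurableSet_Ioo.inter measurableSet_Ioc) hh.integrableOn hh.integrableOn, add_assoc]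
  · have hut : ¬ u ≤ t := fun hut => hst (hsu.le.trans hut)
    have hempty : Ioo s u ∩ Ioc 0 t = ∅ :=
      eq_empty_of_forall_notMem fun v hv => hst (hv.1.1.trans_le hv.2.2).le
    simp [hst, hut, hempty]

section CreditSpread

variable {μ : Measure (ℝ × ℝ)} [IsFiniteMeasure μ] {ν : Measure ℝ} [IsFiniteMeasure ν]
  {g₀ : ℝ → ℝ} {α : ℝ → ℝ → ℝ} {D₀ Cα t T : ℝ}

theorem integrable_add_setIntegral (hg₀meas : Measurable g₀) (hg₀bdd : ∀ u, |g₀ u| ≤ D₀)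
    (hαmeas : Measurable (uncurry α)) (hαbdd : ∀ v u, |α v u| ≤ Cα)
    {s : ℝ × ℝ → Set ℝ} (hs : MeasurableSet {q : ℝ × (ℝ × ℝ) | q.1 ∈ s q.2}) :
    Integrable (fun p : ℝ × ℝ => g₀ p.2 + ∫ v in s p, α v p.2 ∂ν) μ :=
  (integrable_of_abs_le (hg₀meas.comp measurable_snd) fun p => hg₀bdd p.2).add
    (integrable_setIntegral_of_abs_le hs (F := fun v p => α v p.2) (by fun_prop)
      fun v p => hαbdd v p.2)

theorem integrable_setIntegral_Ico_prod_Ioc {ρ : Measure ℝ} [IsFiniteMeasure ρ]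
    (hαmeas : Measurable (uncurry α)) (hαbdd : ∀ v u, |α v u| ≤ Cα) :
    Integrable (fun v => ∫ p in Ico 0 v ×ˢ Ioc v T, α v p.2 ∂μ) ρ :=
  integrable_setIntegral_of_abs_le (S := {q : (ℝ × ℝ) × ℝ | q.1 ∈ Ico 0 q.2 ×ˢ Ioc q.2 T})
    (by measurability) (F := fun p v => α v p.2) (by fun_prop) fun p v => hαbdd v p.2

theorem setIntegral_setIntegral_prod_swap (hαmeas : Measurable (uncurry α))
    (hαbdd : ∀ v u, |α v u| ≤ Cα) :
    ∫ v in Ioc 0 t, (∫ p in Ico 0 v ×ˢ Ioc v T, α v p.2 ∂μ) ∂ν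
      = ∫ p, (∫ v in {v | p ∈ Ico 0 v ×ˢ Ioc v T}, α v p.2 ∂ν.restrict (Ioc 0 t)) ∂μ :=
  integral_setIntegral_swap (S := {q : (ℝ × ℝ) × ℝ | q.1 ∈ Ico 0 q.2 ×ˢ Ioc q.2 T})
    (by measurability) (F := fun p v => α v p.2) (by fun_prop) fun p v => hαbdd v p.2

theorem setIntegral_credit_spread (hμsupp : μ ((Icc 0 T ×ˢ Icc 0 T)ᶜ) = 0)
    (hμdiag : μ {p : ℝ × ℝ | p.2 ≤ p.1} = 0) (hg₀meas : Measurable g₀)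
    (hg₀bdd : ∀ u, |g₀ u| ≤ D₀) (hαmeas : Measurable (uncurry α)) (hαbdd : ∀ v u, |α v u| ≤ Cα) :
    (∫ p in Icc 0 t ×ˢ Ioc t T, (g₀ p.2 + ∫ v in Ioc 0 t, α v p.2 ∂ν) ∂μ)
        + (∫ p in Icc 0 T ×ˢ Ioc 0 t, (g₀ p.2 + ∫ v in Ioo 0 p.2, α v p.2 ∂ν) ∂μ)
      = (∫ p in Icc 0 t ×ˢ Icc 0 T,
            (if p.1 < p.2 then g₀ p.2 + ∫ v in Ioc 0 p.1, α v p.2 ∂ν else 0) ∂μ)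
        + ∫ v in Ioc 0 t, (∫ p in Ico 0 v ×ˢ Ioc v T, α v p.2 ∂μ) ∂ν := by
  have hE : MeasurableSet (Icc 0 t ×ˢ Ioc t T) := measurableSet_Icc.prod measurableSet_Ioc
  have hH : MeasurableSet (Icc 0 T ×ˢ Ioc 0 t) := measurableSet_Icc.prod measurableSet_Ioc
  have hG : MeasurableSet (Icc 0 t ×ˢ Icc 0 T) := measurableSet_Icc.prod measurableSet_Icc
  have hgt : Integrable (fun p : ℝ × ℝ => g₀ p.2 + ∫ v in Ioc 0 t, α v p.2 ∂ν) μ :=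
    integrable_add_setIntegral hg₀meas hg₀bdd hαmeas hαbdd (by measurability)
  have hgm : Integrable (fun p : ℝ × ℝ => g₀ p.2 + ∫ v in Ioo 0 p.2, α v p.2 ∂ν) μ :=
    integrable_add_setIntegral hg₀meas hg₀bdd hαmeas hαbdd (by measurability)
  have hgs : Integrable (fun p : ℝ × ℝ =>
      if p.1 < p.2 then g₀ p.2 + ∫ v in Ioc 0 p.1, α v p.2 ∂ν else 0) μ :=
    ((integrable_add_setIntegral hg₀meas hg₀bdd hαmeas hαbdd (s := fun p => Ioc 0 p.1)
      (by measurability)).indicator (measurableSet_lt measurable_fst measurable_snd)).congr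
      (ae_of_all _ fun p => by simp only [indicator_apply, mem_ofPred_eq]; rfl)
  have hspread : Integrable (fun p : ℝ × ℝ =>
      ∫ v in {v | p ∈ Ico 0 v ×ˢ Ioc v T}, α v p.2 ∂ν.restrict (Ioc 0 t)) μ :=
    integrable_setIntegral_of_abs_le (S := {q : ℝ × (ℝ × ℝ) | q.2 ∈ Ico 0 q.1 ×ˢ Ioc q.1 T})
      (by measurability) (F := fun v p => α v p.2) (by fun_prop) fun v p => hαbdd v p.2
  rw [setIntegral_setIntegral_prod_swap hαmeas hαbdd, ← integral_indicator hE,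
    ← integral_indicator hH, ← integral_indicator hG,
    ← integral_add (hgt.indicator hE) (hgm.indicator hH),
    ← integral_add (hgs.indicator hG) hspread]
  refine integral_congr_ae ?_
  filter_upwards [mem_ae_iff.2 hμsupp, measure_eq_zero_iff_ae_notMem.1 hμdiag]
    with ⟨s, u⟩ ⟨⟨hs0, hsT⟩, hu0, huT⟩ hsu
  simp only [not_le] at hsu
  have hIoo : {v | (s, u) ∈ Ico 0 v ×ˢ Ioc v T} = Ioo s u := by
    ext v; simp [hs0, huT]
  rw [hIoo, Measure.restrict_restrict measurableSet_Ioo]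
  simp only [indicator_apply, mem_prod, mem_Icc, mem_Ioc, hs0, hsT, hu0, huT, hs0.trans_lt hsu,
    true_and, and_true, if_pos hsu]
  exact ite_add_ite_setIntegral_eq (ν := ν) (h := fun v => α v u)
    (integrable_of_abs_le (by fun_prop) fun v => hαbdd v u) (g₀ u) hsu

end CreditSpread

theorem bond_exponent_representation_general
    (T : ℝ)
    (μ : Measure (ℝ × ℝ)) [IsFiniteMeasure μ]
    (hμsupp : μ ((Icc 0 T ×ˢ Icc 0 T)ᶜ) = 0)
    (hμdiag : μ {p : ℝ × ℝ | p.2 ≤ p.1} = 0)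
    (ν : Measure ℝ) [IsFiniteMeasure ν]
    (f₀ : ℝ → ℝ) (hf₀meas : Measurable f₀) (C₀ : ℝ) (hf₀bdd : ∀ u, |f₀ u| ≤ C₀)
    (a : ℝ → ℝ → ℝ) (hameas : Measurable (Function.uncurry a))
    (Ca : ℝ) (habdd : ∀ v u, |a v u| ≤ Ca)
    (ha0 : ∀ v u, u < v → a v u = 0)
    (g₀ : ℝ → ℝ) (hg₀meas : Measurable g₀) (D₀ : ℝ) (hg₀bdd : ∀ u, |g₀ u| ≤ D₀)
    (α : ℝ → ℝ → ℝ) (hαmeas : Measurable (Function.uncurry α))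
    (Cα : ℝ) (hαbdd : ∀ v u, |α v u| ≤ Cα)
    (f : ℝ → ℝ → ℝ) (hf : ∀ t u, f t u = f₀ u + ∫ v in Ioc 0 t, a v u ∂ν)
    (g : ℝ → ℝ → ℝ) (hg : ∀ t u, g t u = g₀ u + ∫ v in Ioc 0 t, α v u ∂ν)
    (gm : ℝ → ℝ) (hgm : ∀ u, gm u = g₀ u + ∫ v in Ioo 0 u, α v u ∂ν)
    (abar : ℝ → ℝ) (habar : ∀ v, abar v = ∫ u in v..T, a v u)
    (αbar : ℝ → ℝ) (hαbar : ∀ v, αbar v = ∫ p in (Ico 0 v ×ˢ Ioc v T), α v p.2 ∂μ)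
    (t : ℝ) (ht : t ∈ Icc 0 T) :
    (∫ u in t..T, f t u) + (∫ p in (Icc 0 t ×ˢ Ioc t T), g t p.2 ∂μ)
      = (∫ u in (0:ℝ)..T, f₀ u) - (∫ u in (0:ℝ)..t, f u u)
        + (∫ v in Ioc 0 t, (abar v + αbar v) ∂ν)
        + (∫ p in (Icc 0 t ×ˢ Icc 0 T), (if p.1 < p.2 then g p.1 p.2 else 0) ∂μ)
        - (∫ p in (Icc 0 T ×ˢ Ioc 0 t), gm p.2 ∂μ) := by
  simp only [hf, hg, hgm, habar, hαbar]
  rw [integral_add (integrableOn_intervalIntegral hameas habdd ha0 (ht.1.trans ht.2) ht.2)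
    (integrable_setIntegral_Ico_prod_Ioc hαmeas hαbdd)]
  linarith [intervalIntegral_forward_rate (ν := ν) hf₀meas hf₀bdd hameas habdd ha0 ht,
    setIntegral_credit_spread (ν := ν) (t := t) hμsupp hμdiag hg₀meas hg₀bdd hαmeas hαbdd]

/-- Representation of the exponent of the credit risky bond price
(Lemma 3.2 of the paper) in the finite-variation case: the martingale driver
`X ≡ 0` and the Stieltjes measure of the increasing process `A` is `ν`. -/
theorem bond_exponent_representation
    (T : ℝ) (hT : 0 < T)
    (μ : Measure (ℝ × ℝ)) [IsFiniteMeasure μ]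
    (hμsupp : μ ((Icc 0 T ×ˢ Icc 0 T)ᶜ) = 0)
    (hμdiag : μ {p : ℝ × ℝ | p.2 ≤ p.1} = 0)
    (ν : Measure ℝ) [IsFiniteMeasure ν]
    (hν0 : ν {0} = 0) (hνsupp : ν ((Icc 0 T)ᶜ) = 0)
    (f₀ : ℝ → ℝ) (hf₀meas : Measurable f₀) (C₀ : ℝ) (hf₀bdd : ∀ u, |f₀ u| ≤ C₀)
    (a : ℝ → ℝ → ℝ) (hameas : Measurable (Function.uncurry a))
    (Ca : ℝ) (habdd : ∀ v u, |a v u| ≤ Ca)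
    (ha0 : ∀ v u, u < v → a v u = 0)
    (g₀ : ℝ → ℝ) (hg₀meas : Measurable g₀) (D₀ : ℝ) (hg₀bdd : ∀ u, |g₀ u| ≤ D₀)
    (α : ℝ → ℝ → ℝ) (hαmeas : Measurable (Function.uncurry α))
    (Cα : ℝ) (hαbdd : ∀ v u, |α v u| ≤ Cα)
    (hα0 : ∀ v u, u < v → α v u = 0)
    (f : ℝ → ℝ → ℝ) (hf : ∀ t u, f t u = f₀ u + ∫ v in Ioc 0 t, a v u ∂ν)
    (g : ℝ → ℝ → ℝ) (hg : ∀ t u, g t u = g₀ u + ∫ v in Ioc 0 t, α v u ∂ν)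
    (gm : ℝ → ℝ) (hgm : ∀ u, gm u = g₀ u + ∫ v in Ioo 0 u, α v u ∂ν)
    (abar : ℝ → ℝ) (habar : ∀ v, abar v = ∫ u in v..T, a v u)
    (αbar : ℝ → ℝ) (hαbar : ∀ v, αbar v = ∫ p in (Ico 0 v ×ˢ Ioc v T), α v p.2 ∂μ)
    (t : ℝ) (ht : t ∈ Icc 0 T) :
    (∫ u in t..T, f t u) + (∫ p in (Icc 0 t ×ˢ Ioc t T), g t p.2 ∂μ)
      = (∫ u in (0:ℝ)..T, f₀ u) - (∫ u in (0:ℝ)..t, f u u)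
        + (∫ v in Ioc 0 t, (abar v + αbar v) ∂ν)
        + (∫ p in (Icc 0 t ×ˢ Icc 0 T), (if p.1 < p.2 then g p.1 p.2 else 0) ∂μ)
        - (∫ p in (Icc 0 T ×ˢ Ioc 0 t), gm p.2 ∂μ) :=
  bond_exponent_representation_general T μ hμsupp hμdiag ν f₀ hf₀meas C₀ hf₀bdd a hameas Ca habdd
    ha0 g₀ hg₀meas D₀ hg₀bdd α hαmeas Cα hαbdd f hf g hg gm hgm abar habar αbar hαbar t ht
end

section
/- Let t ∈ [0,T]. Then ∫_t^T f(t,u) du = ∫_0^T f₀(u) du + ∫_{(0,t]} ā(v,T) ν(dv) − ∫_0^t f(u,u) du. (This is the Heath–Jarrow–Morton reformulation of the absolutely continuous part of the term structure, i.e. the f-part of the proof of Lemma 3.2, with the martingale driver X ≡ 0 and the Stieltjes measure of the increasing process A given by ν.) -/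
/-!
Put `G u := ∫_{(0,t]} a(v,u) ν(dv)`, so that `f(t,u) = f₀(u) + G(u)`. Since `a(v,u) = 0` for
`v > u`, also `f(u,u) = f₀(u) + G(u)` for `u ≤ t`: on `[0,t]` the diagonal and the slice at time
`t` agree. Hence `∫_t^T f(t,u) du + ∫_0^t f(u,u) du = ∫_0^T (f₀ + G)`, and Fubini turns `∫_0^T G`
into `∫_{(0,t]} ∫_0^T a(v,u) du ν(dv)`, whose inner integral is `ā(v,T)` because `a(v,·)`
vanishes below `v`.
-/

open MeasureTheory Set Function

section Truncation

variable {E : Type*} [NormedAddCommGroup E] [NormedSpace ℝ E] {μ : Measure ℝ} {g : ℝ → E}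
  {a b c : ℝ}

theorem setIntegral_Ioc_eq_of_forall_gt_eq_zero (hbc : b ≤ c) (hg : ∀ x, b < x → g x = 0) :
    ∫ x in Ioc a c, g x ∂μ = ∫ x in Ioc a b, g x ∂μ :=
  setIntegral_eq_of_subset_of_forall_sdiff_eq_zero measurableSet_Ioc (Ioc_subset_Ioc_right hbc)
    fun x hx => hg x <| not_le.1 fun hxb => hx.2 ⟨hx.1.1, hxb⟩

theorem setIntegral_Ioc_eq_of_forall_lt_eq_zero [NullSingletonClass μ] (hab : a ≤ b)
    (hg : ∀ x, x < b → g x = 0) :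
    ∫ x in Ioc a c, g x ∂μ = ∫ x in Ioc b c, g x ∂μ :=
  setIntegral_eq_of_subset_of_ae_sdiff_eq_zero measurableSet_Ioc.nullMeasurableSet
    (Ioc_subset_Ioc_left hab) <| (μ.ae_ne b).mono fun x hxb hx =>
      hg x <| lt_of_le_of_ne (not_lt.1 fun hbx => hx.2 ⟨hbx, hx.1.2⟩) hxb

end Truncation

section Kernel

variable {ν : Measure ℝ} [IsFiniteMeasure ν] {a : ℝ → ℝ → ℝ} {C T : ℝ}

theorem integrable_uncurry_swap_of_bounded {μ : Measure ℝ} [IsFiniteMeasure μ]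
    (ha : Measurable (uncurry a)) (hC : ∀ v u, |a v u| ≤ C) :
    Integrable (uncurry fun u v => a v u) (μ.prod ν) :=
  .of_bound (ha.comp measurable_swap).aestronglyMeasurable C (ae_of_all _ fun p => hC p.2 p.1)

theorem intervalIntegrable_setIntegral_kernel (hT : 0 ≤ T) (ha : Measurable (uncurry a))
    (hC : ∀ v u, |a v u| ≤ C) (s : Set ℝ) :
    IntervalIntegrable (fun u => ∫ v in s, a v u ∂ν) volume 0 T :=
  (intervalIntegrable_iff_integrableOn_Ioc_of_le hT).2
    (integrable_uncurry_swap_of_bounded (ν := ν.restrict s) ha hC).integral_prod_left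

theorem intervalIntegral_setIntegral_kernel_comm (hT : 0 ≤ T) (ha : Measurable (uncurry a))
    (hC : ∀ v u, |a v u| ≤ C) (s : Set ℝ) :
    ∫ u in 0..T, (∫ v in s, a v u ∂ν) = ∫ v in s, (∫ u in 0..T, a v u) ∂ν := by
  simp only [intervalIntegral.integral_of_le hT]
  exact integral_integral_swap (integrable_uncurry_swap_of_bounded ha hC)

end Kernel

theorem hjm_reformulation_general
    (T : ℝ)
    (ν : Measure ℝ) [IsFiniteMeasure ν]
    (f₀ : ℝ → ℝ) (hf₀meas : Measurable f₀) (C₀ : ℝ) (hf₀bdd : ∀ u, |f₀ u| ≤ C₀)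
    (a : ℝ → ℝ → ℝ) (hameas : Measurable (Function.uncurry a))
    (Ca : ℝ) (habdd : ∀ v u, |a v u| ≤ Ca)
    (ha0 : ∀ v u, u < v → a v u = 0)
    (f : ℝ → ℝ → ℝ) (hf : ∀ t u, f t u = f₀ u + ∫ v in Ioc 0 t, a v u ∂ν)
    (abar : ℝ → ℝ) (habar : ∀ v, abar v = ∫ u in v..T, a v u)
    (t : ℝ) (ht : t ∈ Icc 0 T) :
    (∫ u in t..T, f t u)
      = (∫ u in (0:ℝ)..T, f₀ u) + (∫ v in Ioc 0 t, abar v ∂ν)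
        - (∫ u in (0:ℝ)..t, f u u) := by
  obtain ⟨ht0, htT⟩ := ht
  have hT : 0 ≤ T := ht0.trans htT
  set G : ℝ → ℝ := fun u => ∫ v in Ioc 0 t, a v u ∂ν
  have hf₀_int : IntervalIntegrable f₀ volume 0 T :=
    (intervalIntegrable_iff_integrableOn_Ioc_of_le hT).2 <|
      .of_bound measure_Ioc_lt_top hf₀meas.aestronglyMeasurable C₀ (ae_of_all _ hf₀bdd)
  have hG_int : IntervalIntegrable G volume 0 T :=
    intervalIntegrable_setIntegral_kernel hT hameas habdd _
  have hF_int : IntervalIntegrable (fun u => f₀ u + G u) volume 0 t :=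
    (hf₀_int.add hG_int).mono_set (uIcc_subset_uIcc_left (mem_uIcc_of_le ht0 htT))
  have hf_diag : EqOn (fun u => f u u) (fun u => f₀ u + G u) (uIcc 0 t) := fun u hu => by
    rw [uIcc_of_le ht0] at hu
    simp only [hf, G, setIntegral_Ioc_eq_of_forall_gt_eq_zero hu.2 fun v => ha0 v u]
  have habar_eq : ∀ v ∈ Ioc 0 t, ∫ u in 0..T, a v u = abar v := fun v hv => by
    rw [habar, intervalIntegral.integral_of_le hT, intervalIntegral.integral_of_le (hv.2.trans htT),
      setIntegral_Ioc_eq_of_forall_lt_eq_zero hv.1.le (ha0 v)]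
  calc ∫ u in t..T, f t u = ∫ u in t..T, f₀ u + G u :=
        intervalIntegral.integral_congr fun u _ => hf t u
    _ = (∫ u in 0..T, f₀ u + G u) - ∫ u in 0..t, f₀ u + G u :=
      (intervalIntegral.integral_interval_sub_left (hf₀_int.add hG_int) hF_int).symm
    _ = _ := by
      rw [intervalIntegral.integral_add hf₀_int hG_int,
        intervalIntegral_setIntegral_kernel_comm hT hameas habdd,
        setIntegral_congr_fun measurableSet_Ioc habar_eq, intervalIntegral.integral_congr hf_diag]

/-- Heath–Jarrow–Morton reformulation of the absolutely continuous part of the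
term structure (the `f`-part of the proof of Lemma 3.2), with the martingale
driver `X ≡ 0` and the Stieltjes measure of the increasing process `A` given by `ν`. -/
theorem hjm_reformulation
    (T : ℝ) (hT : 0 < T)
    (ν : Measure ℝ) [IsFiniteMeasure ν]
    (hν0 : ν {0} = 0) (hνsupp : ν ((Icc 0 T)ᶜ) = 0)
    (f₀ : ℝ → ℝ) (hf₀meas : Measurable f₀) (C₀ : ℝ) (hf₀bdd : ∀ u, |f₀ u| ≤ C₀)
    (a : ℝ → ℝ → ℝ) (hameas : Measurable (Function.uncurry a))
    (Ca : ℝ) (habdd : ∀ v u, |a v u| ≤ Ca)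
    (ha0 : ∀ v u, u < v → a v u = 0)
    (f : ℝ → ℝ → ℝ) (hf : ∀ t u, f t u = f₀ u + ∫ v in Ioc 0 t, a v u ∂ν)
    (abar : ℝ → ℝ) (habar : ∀ v, abar v = ∫ u in v..T, a v u)
    (t : ℝ) (ht : t ∈ Icc 0 T) :
    (∫ u in t..T, f t u)
      = (∫ u in (0:ℝ)..T, f₀ u) + (∫ v in Ioc 0 t, abar v ∂ν)
        - (∫ u in (0:ℝ)..t, f u u) :=
  hjm_reformulation_general T ν f₀ hf₀meas C₀ hf₀bdd a hameas Ca habdd ha0 f hf abar habar t ht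
end

section
/- Let t ∈ [0,T]. Then ∫_{(t,T]} g(t,u) μ_t(du) = ∫_{(0,t]} ᾱ(v,T) ν(dv) + ∫_{[0,t]×[0,T]} 1_{{u>s}} g(s,u) μ(ds,du) − ∫_{(0,t]} g(u−,u) μ̄(du). (This is the representation of the singular/jump part −log G(t,T) = ∫_{(t,T]} g(t,u) μ_t(du) established in the proof of Lemma 3.2, in the finite-variation case with martingale driver X ≡ 0.) -/
open MeasureTheory Set

private lemma integrable_of_bdd {X : Type*} [MeasurableSpace X] {μ : Measure X}
    [IsFiniteMeasure μ] {f : X → ℝ} (hf : AEStronglyMeasurable f μ) {C : ℝ}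
    (h : ∀ x, |f x| ≤ C) : Integrable f μ :=
  Integrable.mono' (integrable_const C) hf
    (Filter.Eventually.of_forall fun x => by simpa [Real.norm_eq_abs] using h x)

/-- Representation of the singular/jump part `-log G(t,T) = ∫_{(t,T]} g(t,u) μ_t(du)`
established in the proof of Lemma 3.2, in the finite-variation case with
martingale driver `X ≡ 0`. -/
theorem log_G_representation
    (T : ℝ) (hT : 0 < T)
    (μ : Measure (ℝ × ℝ)) [IsFiniteMeasure μ]
    (hμsupp : μ ((Icc 0 T ×ˢ Icc 0 T)ᶜ) = 0)
    (hμdiag : μ {p : ℝ × ℝ | p.2 ≤ p.1} = 0)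
    (ν : Measure ℝ) [IsFiniteMeasure ν]
    (hν0 : ν {0} = 0) (hνsupp : ν ((Icc 0 T)ᶜ) = 0)
    (g₀ : ℝ → ℝ) (hg₀meas : Measurable g₀) (D₀ : ℝ) (hg₀bdd : ∀ u, |g₀ u| ≤ D₀)
    (α : ℝ → ℝ → ℝ) (hαmeas : Measurable (Function.uncurry α))
    (Cα : ℝ) (hαbdd : ∀ v u, |α v u| ≤ Cα)
    (hα0 : ∀ v u, u < v → α v u = 0)
    (g : ℝ → ℝ → ℝ) (hg : ∀ t u, g t u = g₀ u + ∫ v in Ioc 0 t, α v u ∂ν)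
    (gm : ℝ → ℝ) (hgm : ∀ u, gm u = g₀ u + ∫ v in Ioo 0 u, α v u ∂ν)
    (αbar : ℝ → ℝ) (hαbar : ∀ v, αbar v = ∫ p in (Ico 0 v ×ˢ Ioc v T), α v p.2 ∂μ)
    (t : ℝ) (ht : t ∈ Icc 0 T) :
    (∫ p in (Icc 0 t ×ˢ Ioc t T), g t p.2 ∂μ)
      = (∫ v in Ioc 0 t, αbar v ∂ν)
        + (∫ p in (Icc 0 t ×ˢ Icc 0 T), (if p.1 < p.2 then g p.1 p.2 else 0) ∂μ)
        - (∫ p in (Icc 0 T ×ˢ Ioc 0 t), gm p.2 ∂μ) := by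
  classical
  have hCα0 : 0 ≤ Cα := le_trans (abs_nonneg _) (hαbdd 0 0)
  have hD₀0 : 0 ≤ D₀ := le_trans (abs_nonneg _) (hg₀bdd 0)
  have mE1 : MeasurableSet (Icc (0:ℝ) t ×ˢ Ioc t T) := measurableSet_Icc.prod measurableSet_Ioc
  have mE2 : MeasurableSet (Icc (0:ℝ) t ×ˢ Icc (0:ℝ) T) :=
    measurableSet_Icc.prod measurableSet_Icc
  have mE3 : MeasurableSet (Icc (0:ℝ) T ×ˢ Ioc (0:ℝ) t) :=
    measurableSet_Icc.prod measurableSet_Ioc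
  have hFmeas : Measurable (fun q : (ℝ × ℝ) × ℝ => α q.2 q.1.2) :=
    hαmeas.comp (measurable_snd.prodMk (measurable_snd.comp measurable_fst))
  set F : (ℝ × ℝ) × ℝ → ℝ := fun q => α q.2 q.1.2 with hF
  -- inner sets
  have mSA : MeasurableSet {q : (ℝ × ℝ) × ℝ | 0 < q.2 ∧ q.2 ≤ t} :=
    (measurableSet_lt measurable_const measurable_snd).inter
      (measurableSet_le measurable_snd measurable_const)
  have mSC : MeasurableSet {q : (ℝ × ℝ) × ℝ | 0 < q.2 ∧ q.2 ≤ q.1.1} :=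
    (measurableSet_lt measurable_const measurable_snd).inter
      (measurableSet_le measurable_snd (measurable_fst.comp measurable_fst))
  have mSD : MeasurableSet {q : (ℝ × ℝ) × ℝ | 0 < q.2 ∧ q.2 < q.1.2} :=
    (measurableSet_lt measurable_const measurable_snd).inter
      (measurableSet_lt measurable_snd (measurable_snd.comp measurable_fst))
  -- integrability of bounded indicator functions on the product
  have bnd : ∀ (S : Set ((ℝ × ℝ) × ℝ)) (q), |S.indicator F q| ≤ Cα := by
    intro S q
    by_cases hq : q ∈ S
    · rw [indicator_of_mem hq]; exact hαbdd _ _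
    · rw [indicator_of_notMem hq]; simpa using hCα0
  have intI : ∀ (S : Set ((ℝ × ℝ) × ℝ)), MeasurableSet S →
      Integrable (S.indicator F) (μ.prod ν) := fun S hS =>
    integrable_of_bdd (hFmeas.indicator hS).aestronglyMeasurable (bnd S)
  -- combined sets measurable
  have mTA : MeasurableSet {q : (ℝ × ℝ) × ℝ |
      q.1 ∈ Icc (0:ℝ) t ×ˢ Ioc t T ∧ 0 < q.2 ∧ q.2 ≤ t} :=
    (mE1.preimage measurable_fst).inter mSA
  have mTC : MeasurableSet {q : (ℝ × ℝ) × ℝ |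
      q.1 ∈ Icc (0:ℝ) t ×ˢ Icc (0:ℝ) T ∧ 0 < q.2 ∧ q.2 ≤ q.1.1} :=
    (mE2.preimage measurable_fst).inter mSC
  have mTD : MeasurableSet {q : (ℝ × ℝ) × ℝ |
      q.1 ∈ Icc (0:ℝ) T ×ˢ Ioc (0:ℝ) t ∧ 0 < q.2 ∧ q.2 < q.1.2} :=
    (mE3.preimage measurable_fst).inter mSD
  have mTB : MeasurableSet {q : (ℝ × ℝ) × ℝ |
      (0 < q.2 ∧ q.2 ≤ t) ∧ (0 ≤ q.1.1 ∧ q.1.1 < q.2) ∧ q.2 < q.1.2 ∧ q.1.2 ≤ T} := by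
    have h1 : MeasurableSet {q : (ℝ × ℝ) × ℝ | 0 < q.2 ∧ q.2 ≤ t} := mSA
    have h2 : MeasurableSet {q : (ℝ × ℝ) × ℝ | (0 ≤ q.1.1 ∧ q.1.1 < q.2) ∧
        q.2 < q.1.2 ∧ q.1.2 ≤ T} :=
      ((measurableSet_le measurable_const (measurable_fst.comp measurable_fst)).inter
        (measurableSet_lt (measurable_fst.comp measurable_fst) measurable_snd)).inter
      ((measurableSet_lt measurable_snd (measurable_snd.comp measurable_fst)).inter
        (measurableSet_le (measurable_snd.comp measurable_fst) measurable_const))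
    exact h1.inter h2
  -- inner integral rewrites
  have hwA : ∀ p : ℝ × ℝ, (∫ v in Ioc 0 t, α v p.2 ∂ν)
      = ∫ v, ({q : (ℝ × ℝ) × ℝ | 0 < q.2 ∧ q.2 ≤ t}).indicator F (p, v) ∂ν := by
    intro p
    rw [← integral_indicator measurableSet_Ioc]
    congr 1
  have hwC : ∀ p : ℝ × ℝ, (∫ v in Ioc 0 p.1, α v p.2 ∂ν)
      = ∫ v, ({q : (ℝ × ℝ) × ℝ | 0 < q.2 ∧ q.2 ≤ q.1.1}).indicator F (p, v) ∂ν := by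
    intro p
    rw [← integral_indicator measurableSet_Ioc]
    congr 1
  have hwD : ∀ p : ℝ × ℝ, (∫ v in Ioo 0 p.2, α v p.2 ∂ν)
      = ∫ v, ({q : (ℝ × ℝ) × ℝ | 0 < q.2 ∧ q.2 < q.1.2}).indicator F (p, v) ∂ν := by
    intro p
    rw [← integral_indicator measurableSet_Ioo]
    congr 1
  -- conversion of set double integrals to product integrals
  have hconv : ∀ (E : Set (ℝ × ℝ)) (S : Set ((ℝ × ℝ) × ℝ)), MeasurableSet E →
      MeasurableSet ({q : (ℝ × ℝ) × ℝ | q.1 ∈ E ∧ q ∈ S}) →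
      (∫ p in E, (∫ v, S.indicator F (p, v) ∂ν) ∂μ)
        = ∫ q, ({q : (ℝ × ℝ) × ℝ | q.1 ∈ E ∧ q ∈ S}).indicator F q ∂(μ.prod ν) := by
    intro E S hE hT'
    rw [← integral_indicator hE, integral_prod _ (intI _ hT')]
    congr 1; funext p
    by_cases hp : p ∈ E
    · rw [indicator_of_mem hp]
      congr 1; funext v
      simp [Set.indicator_apply, hp]
    · rw [indicator_of_notMem hp]
      symm
      have hz : ∀ v, ({q : (ℝ × ℝ) × ℝ | q.1 ∈ E ∧ q ∈ S}).indicator F (p, v) = 0 :=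
        fun v => indicator_of_notMem (fun h => hp h.1) F
      simp [hz]
  -- integrability of inner integral functions
  have intInnerA : Integrable (fun p : ℝ × ℝ =>
      ∫ v, ({q : (ℝ × ℝ) × ℝ | 0 < q.2 ∧ q.2 ≤ t}).indicator F (p, v) ∂ν) μ :=
    (intI _ mSA).integral_prod_left
  have intInnerC : Integrable (fun p : ℝ × ℝ =>
      ∫ v, ({q : (ℝ × ℝ) × ℝ | 0 < q.2 ∧ q.2 ≤ q.1.1}).indicator F (p, v) ∂ν) μ :=
    (intI _ mSC).integral_prod_left
  have intInnerD : Integrable (fun p : ℝ × ℝ =>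
      ∫ v, ({q : (ℝ × ℝ) × ℝ | 0 < q.2 ∧ q.2 < q.1.2}).indicator F (p, v) ∂ν) μ :=
    (intI _ mSD).integral_prod_left
  have intg₀ : Integrable (fun p : ℝ × ℝ => g₀ p.2) μ :=
    integrable_of_bdd (hg₀meas.comp measurable_snd).aestronglyMeasurable fun p => hg₀bdd p.2
  -- a.e. facts
  have hae2 : ∀ᵐ p ∂μ, p.1 < p.2 := by
    rw [ae_iff]; simp only [not_lt]; exact hμdiag
  have hμae : ∀ᵐ p ∂μ, p ∈ Icc (0:ℝ) T ×ˢ Icc (0:ℝ) T ∧ p.1 < p.2 :=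
    (ae_iff.mpr hμsupp).and hae2
  have hνae : ∀ᵐ v ∂ν, 0 < v ∧ v ≤ T := by
    rw [ae_iff]
    refine measure_mono_null ?_ (measure_union_null hν0 hνsupp)
    intro v hv
    simp only [mem_setOf_eq, not_and, not_le] at hv
    rcases lt_trichotomy v 0 with h | h | h
    · exact Or.inr (by simp only [mem_compl_iff, Set.mem_Icc]; intro h'; linarith [h'.1])
    · exact Or.inl (by simp [h])
    · exact Or.inr (by simp only [mem_compl_iff, Set.mem_Icc]; intro h'; linarith [h'.2, hv h])
  have hπae : ∀ᵐ q ∂(μ.prod ν),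
      ((q.1 ∈ Icc (0:ℝ) T ×ˢ Icc (0:ℝ) T ∧ q.1.1 < q.1.2) ∧ (0 < q.2 ∧ q.2 ≤ T)) := by
    have hμ0 : μ {p : ℝ × ℝ | ¬(p ∈ Icc (0:ℝ) T ×ˢ Icc (0:ℝ) T ∧ p.1 < p.2)} = 0 :=
      ae_iff.mp hμae
    have hν0' : ν {v : ℝ | ¬(0 < v ∧ v ≤ T)} = 0 := ae_iff.mp hνae
    have hA : ∀ᵐ q ∂(μ.prod ν), q.1 ∈ Icc (0:ℝ) T ×ˢ Icc (0:ℝ) T ∧ q.1.1 < q.1.2 := by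
      rw [ae_iff]
      have hset : {q : (ℝ × ℝ) × ℝ | ¬(q.1 ∈ Icc (0:ℝ) T ×ˢ Icc (0:ℝ) T ∧ q.1.1 < q.1.2)}
          = {p : ℝ × ℝ | ¬(p ∈ Icc (0:ℝ) T ×ˢ Icc (0:ℝ) T ∧ p.1 < p.2)} ×ˢ (univ : Set ℝ) := by
        ext q; simp [Set.mem_prod]
      rw [hset, Measure.prod_prod, hμ0, zero_mul]
    have hB : ∀ᵐ q ∂(μ.prod ν), 0 < q.2 ∧ q.2 ≤ T := by
      rw [ae_iff]
      have hset : {q : (ℝ × ℝ) × ℝ | ¬(0 < q.2 ∧ q.2 ≤ T)}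
          = (univ : Set (ℝ × ℝ)) ×ˢ {v : ℝ | ¬(0 < v ∧ v ≤ T)} := by
        ext q; simp [Set.mem_prod]
      rw [hset, Measure.prod_prod, hν0', mul_zero]
    exact hA.and hB
  -- term 1 : the LHS
  have eq1 : (∫ p in (Icc 0 t ×ˢ Ioc t T), g t p.2 ∂μ)
      = (∫ p in (Icc 0 t ×ˢ Ioc t T), g₀ p.2 ∂μ)
        + ∫ q, ({q : (ℝ × ℝ) × ℝ | q.1 ∈ Icc (0:ℝ) t ×ˢ Ioc t T ∧ 0 < q.2 ∧ q.2 ≤ t}).indicator F q ∂(μ.prod ν) := by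
    have hrw : ∀ p : ℝ × ℝ, g t p.2 = g₀ p.2
        + ∫ v, ({q : (ℝ × ℝ) × ℝ | 0 < q.2 ∧ q.2 ≤ t}).indicator F (p, v) ∂ν := by
      intro p; rw [hg, hwA]
    simp only [hrw]
    rw [integral_add (intg₀.restrict) (intInnerA.restrict)]
    congr 1
    exact hconv _ _ mE1 mTA
  -- term B
  have eqB : (∫ v in Ioc 0 t, αbar v ∂ν)
      = ∫ q, ({q : (ℝ × ℝ) × ℝ | (0 < q.2 ∧ q.2 ≤ t) ∧ (0 ≤ q.1.1 ∧ q.1.1 < q.2) ∧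
          q.2 < q.1.2 ∧ q.1.2 ≤ T}).indicator F q ∂(μ.prod ν) := by
    rw [integral_prod_symm _ (intI _ mTB), ← integral_indicator measurableSet_Ioc]
    congr 1; funext v
    by_cases hv : v ∈ Ioc (0:ℝ) t
    · rw [indicator_of_mem hv, hαbar, ← integral_indicator (measurableSet_Ico.prod
        measurableSet_Ioc)]
      congr 1; funext p
      have hv1 : 0 < v := hv.1
      have hv2 : v ≤ t := hv.2
      simp [hF, Set.indicator_apply, Set.mem_prod, Set.mem_Ico, Set.mem_Ioc, hv1, hv2]
    · rw [indicator_of_notMem hv]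
      symm
      have hz : ∀ p : ℝ × ℝ, ({q : (ℝ × ℝ) × ℝ | (0 < q.2 ∧ q.2 ≤ t) ∧
          (0 ≤ q.1.1 ∧ q.1.1 < q.2) ∧ q.2 < q.1.2 ∧ q.1.2 ≤ T}).indicator F (p, v) = 0 :=
        fun p => indicator_of_notMem (fun h => hv h.1) F
      simp [hz]
  -- term C
  have eqC : (∫ p in (Icc 0 t ×ˢ Icc 0 T), (if p.1 < p.2 then g p.1 p.2 else 0) ∂μ)
      = (∫ p in (Icc 0 t ×ˢ Icc 0 T), g₀ p.2 ∂μ)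
        + ∫ q, ({q : (ℝ × ℝ) × ℝ | q.1 ∈ Icc (0:ℝ) t ×ˢ Icc (0:ℝ) T ∧ 0 < q.2 ∧ q.2 ≤ q.1.1}).indicator F q ∂(μ.prod ν) := by
    have step1 : (∫ p in (Icc 0 t ×ˢ Icc 0 T), (if p.1 < p.2 then g p.1 p.2 else 0) ∂μ)
        = ∫ p in (Icc 0 t ×ˢ Icc 0 T), g p.1 p.2 ∂μ := by
      refine integral_congr_ae ?_
      filter_upwards [ae_restrict_of_ae hae2] with p hp
      rw [if_pos hp]
    rw [step1]
    have hrw : ∀ p : ℝ × ℝ, g p.1 p.2 = g₀ p.2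
        + ∫ v, ({q : (ℝ × ℝ) × ℝ | 0 < q.2 ∧ q.2 ≤ q.1.1}).indicator F (p, v) ∂ν := by
      intro p; rw [hg, hwC]
    simp only [hrw]
    rw [integral_add (intg₀.restrict) (intInnerC.restrict)]
    congr 1
    exact hconv _ _ mE2 mTC
  -- term D
  have eqD : (∫ p in (Icc 0 T ×ˢ Ioc 0 t), gm p.2 ∂μ)
      = (∫ p in (Icc 0 T ×ˢ Ioc 0 t), g₀ p.2 ∂μ)
        + ∫ q, ({q : (ℝ × ℝ) × ℝ | q.1 ∈ Icc (0:ℝ) T ×ˢ Ioc (0:ℝ) t ∧ 0 < q.2 ∧ q.2 < q.1.2}).indicator F q ∂(μ.prod ν) := by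
    have hrw : ∀ p : ℝ × ℝ, gm p.2 = g₀ p.2
        + ∫ v, ({q : (ℝ × ℝ) × ℝ | 0 < q.2 ∧ q.2 < q.1.2}).indicator F (p, v) ∂ν := by
      intro p; rw [hgm, hwD]
    simp only [hrw]
    rw [integral_add (intg₀.restrict) (intInnerD.restrict)]
    congr 1
    exact hconv _ _ mE3 mTD
  -- the g₀ identity
  have eqI : (∫ p in (Icc 0 t ×ˢ Ioc t T), g₀ p.2 ∂μ)
      = (∫ p in (Icc 0 t ×ˢ Icc 0 T), g₀ p.2 ∂μ) - ∫ p in (Icc 0 T ×ˢ Ioc 0 t), g₀ p.2 ∂μ := by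
    have i1 : Integrable ((Icc (0:ℝ) t ×ˢ Ioc t T).indicator fun p : ℝ × ℝ => g₀ p.2) μ :=
      intg₀.indicator mE1
    have i2 : Integrable ((Icc (0:ℝ) t ×ˢ Icc (0:ℝ) T).indicator fun p : ℝ × ℝ => g₀ p.2) μ :=
      intg₀.indicator mE2
    have i3 : Integrable ((Icc (0:ℝ) T ×ˢ Ioc (0:ℝ) t).indicator fun p : ℝ × ℝ => g₀ p.2) μ :=
      intg₀.indicator mE3
    rw [← integral_indicator mE1, ← integral_indicator mE2, ← integral_indicator mE3,
      ← integral_sub i2 i3]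
    refine integral_congr_ae ?_
    filter_upwards [hμae] with p hp
    obtain ⟨hmem, hsu⟩ := hp
    have hs0 : 0 ≤ p.1 := hmem.1.1
    have hsT : p.1 ≤ T := hmem.1.2
    have hu0 : 0 ≤ p.2 := hmem.2.1
    have huT : p.2 ≤ T := hmem.2.2
    by_cases hut : p.2 ≤ t
    · have h1 : p ∉ Icc (0:ℝ) t ×ˢ Ioc t T := fun h => absurd h.2.1 (not_lt.mpr hut)
      have h2 : p ∈ Icc (0:ℝ) t ×ˢ Icc (0:ℝ) T := ⟨⟨hs0, le_trans hsu.le hut⟩, hu0, huT⟩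
      have h3 : p ∈ Icc (0:ℝ) T ×ˢ Ioc (0:ℝ) t := ⟨⟨hs0, hsT⟩, lt_of_le_of_lt hs0 hsu, hut⟩
      rw [indicator_of_notMem h1, indicator_of_mem h2, indicator_of_mem h3]; ring
    · push_neg at hut
      have h3 : p ∉ Icc (0:ℝ) T ×ˢ Ioc (0:ℝ) t := fun h => absurd h.2.2 (not_le.mpr hut)
      by_cases hst : p.1 ≤ t
      · have h1 : p ∈ Icc (0:ℝ) t ×ˢ Ioc t T := ⟨⟨hs0, hst⟩, hut, huT⟩
        have h2 : p ∈ Icc (0:ℝ) t ×ˢ Icc (0:ℝ) T := ⟨⟨hs0, hst⟩, hu0, huT⟩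
        rw [indicator_of_mem h1, indicator_of_mem h2, indicator_of_notMem h3]; ring
      · have h1 : p ∉ Icc (0:ℝ) t ×ˢ Ioc t T := fun h => absurd h.1.2 hst
        have h2 : p ∉ Icc (0:ℝ) t ×ˢ Icc (0:ℝ) T := fun h => absurd h.1.2 hst
        rw [indicator_of_notMem h1, indicator_of_notMem h2, indicator_of_notMem h3]; ring
  -- the main product-measure identity
  have eqJ : (∫ q, ({q : (ℝ × ℝ) × ℝ | q.1 ∈ Icc (0:ℝ) t ×ˢ Ioc t T ∧ 0 < q.2 ∧ q.2 ≤ t}).indicator F q ∂(μ.prod ν))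
      = (∫ q, ({q : (ℝ × ℝ) × ℝ | (0 < q.2 ∧ q.2 ≤ t) ∧ (0 ≤ q.1.1 ∧ q.1.1 < q.2) ∧
          q.2 < q.1.2 ∧ q.1.2 ≤ T}).indicator F q ∂(μ.prod ν))
        + (∫ q, ({q : (ℝ × ℝ) × ℝ | q.1 ∈ Icc (0:ℝ) t ×ˢ Icc (0:ℝ) T ∧ 0 < q.2 ∧ q.2 ≤ q.1.1}).indicator F q ∂(μ.prod ν))
        - ∫ q, ({q : (ℝ × ℝ) × ℝ | q.1 ∈ Icc (0:ℝ) T ×ˢ Ioc (0:ℝ) t ∧ 0 < q.2 ∧ q.2 < q.1.2}).indicator F q ∂(μ.prod ν) := by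
    have step : (∫ q, ({q : (ℝ × ℝ) × ℝ | q.1 ∈ Icc (0:ℝ) t ×ˢ Ioc t T ∧ 0 < q.2 ∧ q.2 ≤ t}).indicator F q ∂(μ.prod ν))
        = ∫ q, (({q : (ℝ × ℝ) × ℝ | (0 < q.2 ∧ q.2 ≤ t) ∧ (0 ≤ q.1.1 ∧ q.1.1 < q.2) ∧
            q.2 < q.1.2 ∧ q.1.2 ≤ T}).indicator F q
          + ({q : (ℝ × ℝ) × ℝ | q.1 ∈ Icc (0:ℝ) t ×ˢ Icc (0:ℝ) T ∧ 0 < q.2 ∧ q.2 ≤ q.1.1}).indicator F q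
          - ({q : (ℝ × ℝ) × ℝ | q.1 ∈ Icc (0:ℝ) T ×ˢ Ioc (0:ℝ) t ∧ 0 < q.2 ∧ q.2 < q.1.2}).indicator F q) ∂(μ.prod ν) := by
      refine integral_congr_ae ?_
      filter_upwards [hπae] with q hq
      obtain ⟨⟨hmem, hsu⟩, hv0, hvT⟩ := hq
      have hs0 : 0 ≤ q.1.1 := hmem.1.1
      have hsT : q.1.1 ≤ T := hmem.1.2
      have hu0 : 0 ≤ q.1.2 := hmem.2.1
      have huT : q.1.2 ≤ T := hmem.2.2
      rcases lt_trichotomy q.1.2 q.2 with huv | huv | huv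
      · -- u < v : α vanishes
        have hf0 : F q = 0 := hα0 q.2 q.1.2 huv
        simp [Set.indicator_apply, hf0]
      · -- u = v : no set contains q
        have h1 : q ∉ {q : (ℝ × ℝ) × ℝ | q.1 ∈ Icc (0:ℝ) t ×ˢ Ioc t T ∧ 0 < q.2 ∧ q.2 ≤ t} := by
          rintro ⟨⟨_, h, _⟩, _, hb⟩; linarith
        have h2 : q ∉ {q : (ℝ × ℝ) × ℝ | (0 < q.2 ∧ q.2 ≤ t) ∧ (0 ≤ q.1.1 ∧ q.1.1 < q.2) ∧
            q.2 < q.1.2 ∧ q.1.2 ≤ T} := by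
          rintro ⟨_, _, hb, _⟩; linarith
        have h3 : q ∉ {q : (ℝ × ℝ) × ℝ | q.1 ∈ Icc (0:ℝ) t ×ˢ Icc (0:ℝ) T ∧ 0 < q.2 ∧ q.2 ≤ q.1.1} := by
          rintro ⟨_, _, hb⟩; linarith
        have h4 : q ∉ {q : (ℝ × ℝ) × ℝ | q.1 ∈ Icc (0:ℝ) T ×ˢ Ioc (0:ℝ) t ∧ 0 < q.2 ∧ q.2 < q.1.2} := by
          rintro ⟨_, _, hb⟩; linarith
        rw [indicator_of_notMem h1, indicator_of_notMem h2, indicator_of_notMem h3,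
          indicator_of_notMem h4]; ring
      · -- v < u
        by_cases hut : q.1.2 ≤ t
        · -- u ≤ t : A false, D true, exactly one of B, C
          have h1 : q ∉ {q : (ℝ × ℝ) × ℝ | q.1 ∈ Icc (0:ℝ) t ×ˢ Ioc t T ∧ 0 < q.2 ∧ q.2 ≤ t} := by
            rintro ⟨⟨_, h, _⟩, _⟩; linarith
          have h4 : q ∈ {q : (ℝ × ℝ) × ℝ | q.1 ∈ Icc (0:ℝ) T ×ˢ Ioc (0:ℝ) t ∧ 0 < q.2 ∧ q.2 < q.1.2} :=
            ⟨⟨⟨hs0, hsT⟩, lt_of_le_of_lt hs0 hsu, hut⟩, hv0, huv⟩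
          by_cases hsv : q.1.1 < q.2
          · have h2 : q ∈ {q : (ℝ × ℝ) × ℝ | (0 < q.2 ∧ q.2 ≤ t) ∧ (0 ≤ q.1.1 ∧ q.1.1 < q.2) ∧
                q.2 < q.1.2 ∧ q.1.2 ≤ T} := ⟨⟨hv0, by linarith⟩, ⟨hs0, hsv⟩, huv, huT⟩
            have h3 : q ∉ {q : (ℝ × ℝ) × ℝ | q.1 ∈ Icc (0:ℝ) t ×ˢ Icc (0:ℝ) T ∧ 0 < q.2 ∧ q.2 ≤ q.1.1} := by
              rintro ⟨_, _, hb⟩; linarith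
            rw [indicator_of_notMem h1, indicator_of_mem h2, indicator_of_notMem h3,
              indicator_of_mem h4]; ring
          · push_neg at hsv
            have h2 : q ∉ {q : (ℝ × ℝ) × ℝ | (0 < q.2 ∧ q.2 ≤ t) ∧ (0 ≤ q.1.1 ∧ q.1.1 < q.2) ∧
                q.2 < q.1.2 ∧ q.1.2 ≤ T} := by
              rintro ⟨_, ⟨_, hb⟩, _⟩; linarith
            have h3 : q ∈ {q : (ℝ × ℝ) × ℝ | q.1 ∈ Icc (0:ℝ) t ×ˢ Icc (0:ℝ) T ∧ 0 < q.2 ∧ q.2 ≤ q.1.1} :=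
              ⟨⟨⟨hs0, by linarith⟩, hu0, huT⟩, hv0, hsv⟩
            rw [indicator_of_notMem h1, indicator_of_notMem h2, indicator_of_mem h3,
              indicator_of_mem h4]; ring
        · -- u > t : D false
          push_neg at hut
          have h4 : q ∉ {q : (ℝ × ℝ) × ℝ | q.1 ∈ Icc (0:ℝ) T ×ˢ Ioc (0:ℝ) t ∧ 0 < q.2 ∧ q.2 < q.1.2} := by
            rintro ⟨⟨_, _, hb⟩, _⟩; linarith
          by_cases hst : q.1.1 ≤ t
          · by_cases hvt : q.2 ≤ t
            · have h1 : q ∈ {q : (ℝ × ℝ) × ℝ | q.1 ∈ Icc (0:ℝ) t ×ˢ Ioc t T ∧ 0 < q.2 ∧ q.2 ≤ t} :=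
                ⟨⟨⟨hs0, hst⟩, hut, huT⟩, hv0, hvt⟩
              by_cases hsv : q.1.1 < q.2
              · have h2 : q ∈ {q : (ℝ × ℝ) × ℝ | (0 < q.2 ∧ q.2 ≤ t) ∧
                    (0 ≤ q.1.1 ∧ q.1.1 < q.2) ∧ q.2 < q.1.2 ∧ q.1.2 ≤ T} :=
                  ⟨⟨hv0, hvt⟩, ⟨hs0, hsv⟩, huv, huT⟩
                have h3 : q ∉ {q : (ℝ × ℝ) × ℝ | q.1 ∈ Icc (0:ℝ) t ×ˢ Icc (0:ℝ) T ∧ 0 < q.2 ∧ q.2 ≤ q.1.1} := by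
                  rintro ⟨_, _, hb⟩; linarith
                rw [indicator_of_mem h1, indicator_of_mem h2, indicator_of_notMem h3,
                  indicator_of_notMem h4]; ring
              · push_neg at hsv
                have h2 : q ∉ {q : (ℝ × ℝ) × ℝ | (0 < q.2 ∧ q.2 ≤ t) ∧
                    (0 ≤ q.1.1 ∧ q.1.1 < q.2) ∧ q.2 < q.1.2 ∧ q.1.2 ≤ T} := by
                  rintro ⟨_, ⟨_, hb⟩, _⟩; linarith
                have h3 : q ∈ {q : (ℝ × ℝ) × ℝ | q.1 ∈ Icc (0:ℝ) t ×ˢ Icc (0:ℝ) T ∧ 0 < q.2 ∧ q.2 ≤ q.1.1} :=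
                  ⟨⟨⟨hs0, hst⟩, hu0, huT⟩, hv0, hsv⟩
                rw [indicator_of_mem h1, indicator_of_notMem h2, indicator_of_mem h3,
                  indicator_of_notMem h4]; ring
            · push_neg at hvt
              have h1 : q ∉ {q : (ℝ × ℝ) × ℝ | q.1 ∈ Icc (0:ℝ) t ×ˢ Ioc t T ∧ 0 < q.2 ∧ q.2 ≤ t} := by
                rintro ⟨_, _, hb⟩; linarith
              have h2 : q ∉ {q : (ℝ × ℝ) × ℝ | (0 < q.2 ∧ q.2 ≤ t) ∧
                  (0 ≤ q.1.1 ∧ q.1.1 < q.2) ∧ q.2 < q.1.2 ∧ q.1.2 ≤ T} := by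
                rintro ⟨⟨_, hb⟩, _⟩; linarith
              have h3 : q ∉ {q : (ℝ × ℝ) × ℝ | q.1 ∈ Icc (0:ℝ) t ×ˢ Icc (0:ℝ) T ∧ 0 < q.2 ∧ q.2 ≤ q.1.1} := by
                rintro ⟨_, _, hb⟩; linarith
              rw [indicator_of_notMem h1, indicator_of_notMem h2, indicator_of_notMem h3,
                indicator_of_notMem h4]; ring
          · push_neg at hst
            have h1 : q ∉ {q : (ℝ × ℝ) × ℝ | q.1 ∈ Icc (0:ℝ) t ×ˢ Ioc t T ∧ 0 < q.2 ∧ q.2 ≤ t} := by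
              rintro ⟨⟨⟨_, hb⟩, _⟩, _⟩; linarith
            have h2 : q ∉ {q : (ℝ × ℝ) × ℝ | (0 < q.2 ∧ q.2 ≤ t) ∧
                (0 ≤ q.1.1 ∧ q.1.1 < q.2) ∧ q.2 < q.1.2 ∧ q.1.2 ≤ T} := by
              rintro ⟨⟨_, ha⟩, ⟨_, hb⟩, _⟩; linarith
            have h3 : q ∉ {q : (ℝ × ℝ) × ℝ | q.1 ∈ Icc (0:ℝ) t ×ˢ Icc (0:ℝ) T ∧ 0 < q.2 ∧ q.2 ≤ q.1.1} := by
              rintro ⟨⟨⟨_, hb⟩, _⟩, _⟩; linarith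
            rw [indicator_of_notMem h1, indicator_of_notMem h2, indicator_of_notMem h3,
            indicator_of_notMem h4]; ring
    have hBC : Integrable (fun q : (ℝ × ℝ) × ℝ =>
        ({q : (ℝ × ℝ) × ℝ | (0 < q.2 ∧ q.2 ≤ t) ∧ (0 ≤ q.1.1 ∧ q.1.1 < q.2) ∧
          q.2 < q.1.2 ∧ q.1.2 ≤ T}).indicator F q
        + ({q : (ℝ × ℝ) × ℝ | q.1 ∈ Icc (0:ℝ) t ×ˢ Icc (0:ℝ) T ∧
          0 < q.2 ∧ q.2 ≤ q.1.1}).indicator F q) (μ.prod ν) :=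
      (intI _ mTB).add (intI _ mTC)
    rw [step, integral_sub hBC (intI _ mTD), integral_add (intI _ mTB) (intI _ mTC)]
  rw [eq1, eqB, eqC, eqD]
  linarith [eqI, eqJ]
end
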